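/- arXiv:1011.5674 — 6 statements merged into one kernel-verified Lean document; each statement's English description precedes it below -/
import Mathlib

section
/- Fix a time t at which the fluid dynamics hold. Assume that Δq_{s,k}(t) ≥ 0 for all (s,k) ∈ P, and that π(t) = (π_{s,k}(t))_{(s,k)∈P} lies in Co(M) and maximizes the weight sum Σ_{(s,k)∈P} Δq_{s,k}(t)·φ_{s,k} over all φ ∈ Co(M). Then for every φ ∈ Co(M), Σ_{(s,k)∈P} q_{s,k}(t)·q'_{s,k}(t) ≤ Σ_{(s,k)∈P} Δq_{s,k}(t)·(λ_s − φ_{s,k}). -/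
lemma aux_flow (H : ℕ) (hH : 1 ≤ H) (lam : ℝ) (q ψ π : ℕ → ℝ)
    (hq0 : ∀ k ∈ Finset.Icc 1 H, 0 ≤ q k)
    (hqend : q (H + 1) = 0)
    (hψ0 : ψ 0 = lam)
    (hψπ : ∀ k ∈ Finset.Icc 1 H, ψ k ≤ π k) :
    ∑ k ∈ Finset.Icc 1 H, q k * (ψ (k - 1) - π k)
      ≤ ∑ k ∈ Finset.Icc 1 H, (q k - q (k + 1)) * (lam - π k) := by
  have hrw : ∀ f : ℕ → ℝ, ∑ k ∈ Finset.Icc 1 H, f k = ∑ i ∈ Finset.range H, f (i + 1) := by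
    intro f
    rw [← Finset.Ico_add_one_right_eq_Icc, Finset.sum_Ico_eq_sum_range]
    simp [add_comm]
  rw [hrw, hrw]
  simp only [Nat.add_sub_cancel]
  rw [← sub_nonneg, ← Finset.sum_sub_distrib]
  have key : ∀ i ∈ Finset.range H,
      (q (i + 1) - q (i + 2)) * (lam - π (i + 1)) - q (i + 1) * (ψ i - π (i + 1))
      = ((q (i + 1) - q (i + 2)) * lam + q (i + 2) * π (i + 1)) - q (i + 1) * ψ i := by
    intro i _
    ring_nf
  rw [Finset.sum_congr rfl key, Finset.sum_sub_distrib, sub_nonneg, Finset.sum_add_distrib]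
  have tele : ∑ i ∈ Finset.range H, (q (i + 1) - q (i + 2)) * lam = q 1 * lam := by
    rw [← Finset.sum_mul]
    congr 1
    have := Finset.sum_range_sub (fun i => q (i + 1)) H
    have h2 : ∑ i ∈ Finset.range H, (q (i + 1) - q (i + 2)) =
        - ∑ i ∈ Finset.range H, (q (i + 1 + 1) - q (i + 1)) := by
      rw [← Finset.sum_neg_distrib]
      congr 1; funext i; ring_nf
    rw [h2, this, hqend]; ring
  rw [tele]
  -- LHS: split off i = 0 term
  obtain ⟨n, rfl⟩ : ∃ n, H = n + 1 := ⟨H - 1, (Nat.succ_pred_eq_of_pos hH).symm⟩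
  rw [Finset.sum_range_succ'] -- splits off i=0
  rw [hψ0]
  have hr : ∑ i ∈ Finset.range (n + 1), q (i + 2) * π (i + 1)
      = ∑ i ∈ Finset.range n, q (i + 2) * π (i + 1) + q (n + 2) * π (n + 1) :=
    Finset.sum_range_succ _ _
  rw [hr]
  have hzero : q (n + 2) * π (n + 1) = 0 := by
    have : q (n + 1 + 1) = 0 := hqend
    simp [show n + 2 = n + 1 + 1 from rfl, this]
  have hterm : ∑ i ∈ Finset.range n, q (i + 1 + 1) * ψ (i + 1)
      ≤ ∑ i ∈ Finset.range n, q (i + 2) * π (i + 1) := by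
    apply Finset.sum_le_sum
    intro i hi
    have hi' : i + 1 ∈ Finset.Icc 1 (n + 1) := by
      simp [Finset.mem_range] at hi ⊢; omega
    have hq : 0 ≤ q (i + 2) := hq0 (i + 2) (by simp [Finset.mem_range] at hi ⊢; omega)
    exact mul_le_mul_of_nonneg_left (hψπ (i + 1) hi') hq
  nlinarith [hterm, hzero]



/-- Drift bound for the queue-length-based back-pressure scheduler in the fluid
limit model.  Flows `s` have routes of `H s ≥ 1` hops; the link-flow-pairs are
`(s, k)` with `1 ≤ k ≤ H s`.  `M` is the (nonempty) set of feasible 0-1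
schedules, and `convexHull ℝ M` is `Co(M)`.  At the fixed (regular) time `t`:
`q s k` is the fluid queue length (with convention `q s (H s + 1) = 0`),
`q' s k` its derivative, `lam s ≥ 0` the arrival rate, `ψ`/`π` the fluid
departure/service rates with `ψ s 0 = lam s` and `0 ≤ ψ ≤ π`, and the fluid
dynamics hold.  If all queue differentials `Δq s k = q s k - q s (k+1)` are
nonnegative and `π` lies in `Co(M)` and maximizes the weight sum
`∑ Δq·φ` over `Co(M)`, then for every `φ ∈ Co(M)`,
`∑ q·q' ≤ ∑ Δq·(λ - φ)`. -/
theorem stmt_1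
    (Flow : Type*) [Fintype Flow] [Nonempty Flow]
    (H : Flow → ℕ) (hH : ∀ s, 1 ≤ H s)
    (M : Set (Flow → ℕ → ℝ)) (hMne : M.Nonempty)
    (hM01 : ∀ m ∈ M, ∀ s, ∀ k ∈ Finset.Icc 1 (H s), m s k = 0 ∨ m s k = 1)
    (lam : Flow → ℝ) (hlam : ∀ s, 0 ≤ lam s)
    (q q' ψ π : Flow → ℕ → ℝ)
    (hq0 : ∀ s, ∀ k ∈ Finset.Icc 1 (H s), 0 ≤ q s k)
    (hqend : ∀ s, q s (H s + 1) = 0)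
    (hψ0 : ∀ s, ψ s 0 = lam s)
    (hψπ : ∀ s, ∀ k ∈ Finset.Icc 1 (H s), 0 ≤ ψ s k ∧ ψ s k ≤ π s k)
    (hq'pos : ∀ s, ∀ k ∈ Finset.Icc 1 (H s),
      0 < q s k → q' s k = ψ s (k - 1) - π s k)
    (hq'zero : ∀ s, ∀ k ∈ Finset.Icc 1 (H s),
      q s k = 0 → q' s k = max (ψ s (k - 1) - π s k) 0)
    (hΔ : ∀ s, ∀ k ∈ Finset.Icc 1 (H s), 0 ≤ q s k - q s (k + 1))
    (hπCo : π ∈ convexHull ℝ M)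
    (hπmax : ∀ φ ∈ convexHull ℝ M,
      ∑ s, ∑ k ∈ Finset.Icc 1 (H s), (q s k - q s (k + 1)) * φ s k
        ≤ ∑ s, ∑ k ∈ Finset.Icc 1 (H s), (q s k - q s (k + 1)) * π s k) :
    ∀ φ ∈ convexHull ℝ M,
      ∑ s, ∑ k ∈ Finset.Icc 1 (H s), q s k * q' s k
        ≤ ∑ s, ∑ k ∈ Finset.Icc 1 (H s), (q s k - q s (k + 1)) * (lam s - φ s k) := by
  intro φ hφ
  have step1 : ∑ s, ∑ k ∈ Finset.Icc 1 (H s), q s k * q' s k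
      = ∑ s, ∑ k ∈ Finset.Icc 1 (H s), q s k * (ψ s (k - 1) - π s k) := by
    refine Finset.sum_congr rfl fun s _ => Finset.sum_congr rfl fun k hk => ?_
    rcases (hq0 s k hk).lt_or_eq with h | h
    · rw [hq'pos s k hk h]
    · rw [← h]; ring
  have step2 : ∑ s, ∑ k ∈ Finset.Icc 1 (H s), q s k * (ψ s (k - 1) - π s k)
      ≤ ∑ s, ∑ k ∈ Finset.Icc 1 (H s), (q s k - q s (k + 1)) * (lam s - π s k) := by
    apply Finset.sum_le_sum
    intro s _
    exact aux_flow (H s) (hH s) (lam s) (q s) (ψ s) (π s) (hq0 s) (hqend s) (hψ0 s)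
      (fun k hk => (hψπ s k hk).2)
  have step3 : ∑ s, ∑ k ∈ Finset.Icc 1 (H s), (q s k - q s (k + 1)) * (lam s - π s k)
      ≤ ∑ s, ∑ k ∈ Finset.Icc 1 (H s), (q s k - q s (k + 1)) * (lam s - φ s k) := by
    rw [← sub_nonneg, ← Finset.sum_sub_distrib]
    have : ∀ s ∈ (Finset.univ : Finset Flow),
        (∑ k ∈ Finset.Icc 1 (H s), (q s k - q s (k + 1)) * (lam s - φ s k))
        - (∑ k ∈ Finset.Icc 1 (H s), (q s k - q s (k + 1)) * (lam s - π s k))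
        = (∑ k ∈ Finset.Icc 1 (H s), (q s k - q s (k + 1)) * π s k)
        - (∑ k ∈ Finset.Icc 1 (H s), (q s k - q s (k + 1)) * φ s k) := by
      intro s _
      rw [← Finset.sum_sub_distrib, ← Finset.sum_sub_distrib]
      exact Finset.sum_congr rfl fun k _ => by ring
    rw [Finset.sum_congr rfl this, Finset.sum_sub_distrib, sub_nonneg]
    exact hπmax φ hφ
  rw [step1]
  exact le_trans step2 step3
end

section
/- (Fluid-model throughput optimality of the queue-length-based back-pressure scheduler.) Fix a time t at which the fluid dynamics hold. Assume that Δq_{s,k}(t) ≥ 0 for all (s,k) ∈ P, that π(t) = (π_{s,k}(t))_{(s,k)∈P} lies in Co(M) and maximizes Σ_{(s,k)∈P} Δq_{s,k}(t)·φ_{s,k} over all φ ∈ Co(M), and that the arrival rate vector is strictly inside the optimal throughput region, i.e., there exists φ* ∈ Co(M) with λ_s < φ*_{s,k} for all (s,k) ∈ P. If the Lyapunov function V(t) = (1/2)·Σ_{(s,k)∈P} q_{s,k}(t)² is strictly positive, then its derivative Σ_{(s,k)∈P} q_{s,k}(t)·q'_{s,k}(t) is strictly negative. -/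
/-- Telescoping sum over `Icc m n`. -/
lemma telesc (g : ℕ → ℝ) (m n : ℕ) (h : m ≤ n + 1) :
    ∑ k ∈ Finset.Icc m n, (g k - g (k + 1)) = g m - g (n + 1) := by
  induction n with
  | zero => interval_cases m <;> simp
  | succ n ih =>
    rcases eq_or_lt_of_le h with h' | h'
    · subst h'
      rw [Finset.Icc_eq_empty_of_lt (by omega)]
      simp
    · rw [Finset.sum_Icc_succ_top (by omega), ih (by omega)]; ring

/-- Per-flow drift bound. -/
lemma per_flow (H : ℕ) (lam : ℝ) (q q' ψ π : ℕ → ℝ)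
    (hq0 : ∀ k ∈ Finset.Icc 1 H, 0 ≤ q k)
    (hqend : q (H + 1) = 0)
    (hψ0 : ψ 0 = lam)
    (hψπ : ∀ k ∈ Finset.Icc 1 H, 0 ≤ ψ k ∧ ψ k ≤ π k)
    (hq'pos : ∀ k ∈ Finset.Icc 1 H, 0 < q k → q' k = ψ (k - 1) - π k) :
    ∑ k ∈ Finset.Icc 1 H, q k * q' k
      ≤ ∑ k ∈ Finset.Icc 1 H, (q k - q (k + 1)) * (lam - π k) := by
  have step1 : ∑ k ∈ Finset.Icc 1 H, q k * q' k
      = ∑ k ∈ Finset.Icc 1 H, q k * (ψ (k - 1) - π k) := by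
    refine Finset.sum_congr rfl fun k hk => ?_
    rcases (hq0 k hk).eq_or_lt with h | h
    · rw [← h]; ring
    · rw [hq'pos k hk h]
  have tel : ∑ k ∈ Finset.Icc 1 H, (q k * ψ (k - 1) - q (k + 1) * ψ k)
      = q 1 * ψ 0 - q (H + 1) * ψ H := by
    have := telesc (fun k => q k * ψ (k - 1)) 1 H (by omega)
    simpa using this
  have step2 : ∑ k ∈ Finset.Icc 1 H, q k * (ψ (k - 1) - π k)
      = q 1 * lam + ∑ k ∈ Finset.Icc 1 H, (q (k + 1) * ψ k - q k * π k) := by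
    have : ∑ k ∈ Finset.Icc 1 H, q k * (ψ (k - 1) - π k)
        = ∑ k ∈ Finset.Icc 1 H, ((q k * ψ (k - 1) - q (k + 1) * ψ k)
            + (q (k + 1) * ψ k - q k * π k)) := by
      refine Finset.sum_congr rfl fun k hk => ?_; ring
    rw [this, Finset.sum_add_distrib, tel, hqend, hψ0]; ring
  have step3 : ∑ k ∈ Finset.Icc 1 H, (q (k + 1) * ψ k - q k * π k)
      ≤ ∑ k ∈ Finset.Icc 1 H, (q (k + 1) * π k - q k * π k) := by
    refine Finset.sum_le_sum fun k hk => ?_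
    have hk' : 1 ≤ k ∧ k ≤ H := by simpa using hk
    have hq1 : 0 ≤ q (k + 1) := by
      rcases eq_or_lt_of_le hk'.2 with h | h
      · rw [h, hqend]
      · exact hq0 (k + 1) (by simp; omega)
    have := (hψπ k hk).2
    nlinarith
  have step4 : ∑ k ∈ Finset.Icc 1 H, (q k - q (k + 1)) * (lam - π k)
      = q 1 * lam + ∑ k ∈ Finset.Icc 1 H, (q (k + 1) * π k - q k * π k) := by
    have : ∑ k ∈ Finset.Icc 1 H, (q k - q (k + 1)) * (lam - π k)
        = ∑ k ∈ Finset.Icc 1 H, ((q k - q (k + 1)) * lam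
            + (q (k + 1) * π k - q k * π k)) := by
      refine Finset.sum_congr rfl fun k hk => ?_; ring
    rw [this, Finset.sum_add_distrib, ← Finset.sum_mul,
      telesc (fun k => q k) 1 H (by omega), hqend]; ring
  rw [step1, step2, step4]
  linarith




/-- Fluid-model throughput optimality of the queue-length-based back-pressure
scheduler (Q-BP).  In the setting of the fluid limit model at a fixed regular
time `t` (see the hypotheses), if additionally the arrival rate vector is
strictly inside the optimal throughput region (there is `φ* ∈ Co(M)` with
`lam s < φ* s k` for all link-flow-pairs `(s,k)`) and the Lyapunov function
`V = (1/2) ∑ q²` is strictly positive, then its derivative `∑ q·q'` is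
strictly negative. -/
theorem stmt_2
    (Flow : Type*) [Fintype Flow] [Nonempty Flow]
    (H : Flow → ℕ) (hH : ∀ s, 1 ≤ H s)
    (M : Set (Flow → ℕ → ℝ)) (hMne : M.Nonempty)
    (hM01 : ∀ m ∈ M, ∀ s, ∀ k ∈ Finset.Icc 1 (H s), m s k = 0 ∨ m s k = 1)
    (lam : Flow → ℝ) (hlam : ∀ s, 0 ≤ lam s)
    (q q' ψ π : Flow → ℕ → ℝ)
    (hq0 : ∀ s, ∀ k ∈ Finset.Icc 1 (H s), 0 ≤ q s k)
    (hqend : ∀ s, q s (H s + 1) = 0)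
    (hψ0 : ∀ s, ψ s 0 = lam s)
    (hψπ : ∀ s, ∀ k ∈ Finset.Icc 1 (H s), 0 ≤ ψ s k ∧ ψ s k ≤ π s k)
    (hq'pos : ∀ s, ∀ k ∈ Finset.Icc 1 (H s),
      0 < q s k → q' s k = ψ s (k - 1) - π s k)
    (hq'zero : ∀ s, ∀ k ∈ Finset.Icc 1 (H s),
      q s k = 0 → q' s k = max (ψ s (k - 1) - π s k) 0)
    (hΔ : ∀ s, ∀ k ∈ Finset.Icc 1 (H s), 0 ≤ q s k - q s (k + 1))
    (hπCo : π ∈ convexHull ℝ M)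
    (hπmax : ∀ φ ∈ convexHull ℝ M,
      ∑ s, ∑ k ∈ Finset.Icc 1 (H s), (q s k - q s (k + 1)) * φ s k
        ≤ ∑ s, ∑ k ∈ Finset.Icc 1 (H s), (q s k - q s (k + 1)) * π s k)
    (φstar : Flow → ℕ → ℝ) (hφstarCo : φstar ∈ convexHull ℝ M)
    (hstrict : ∀ s, ∀ k ∈ Finset.Icc 1 (H s), lam s < φstar s k)
    (hV : 0 < (1 / 2 : ℝ) * ∑ s, ∑ k ∈ Finset.Icc 1 (H s), (q s k) ^ 2) :
    ∑ s, ∑ k ∈ Finset.Icc 1 (H s), q s k * q' s k < 0 := by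
  classical
  -- Per-flow drift bound
  have key : ∀ s, ∑ k ∈ Finset.Icc 1 (H s), q s k * q' s k
      ≤ ∑ k ∈ Finset.Icc 1 (H s), (q s k - q s (k + 1)) * (lam s - π s k) :=
    fun s => per_flow (H s) (lam s) (q s) (q' s) (ψ s) (π s)
      (hq0 s) (hqend s) (hψ0 s) (hψπ s) (hq'pos s)
  -- Some queue is positive
  have hex : ∃ s, ∃ k ∈ Finset.Icc 1 (H s), 0 < q s k := by
    by_contra h
    push_neg at h
    have hzero : ∑ s, ∑ k ∈ Finset.Icc 1 (H s), (q s k) ^ 2 = 0 := by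
      refine Finset.sum_eq_zero fun s _ => Finset.sum_eq_zero fun k hk => ?_
      have := le_antisymm (h s k hk) (hq0 s k hk)
      simp [this]
    rw [hzero] at hV
    norm_num at hV
  obtain ⟨s0, k0, hk0, hq0pos⟩ := hex
  -- Hence some queue differential is strictly positive
  have hexΔ : ∃ k ∈ Finset.Icc 1 (H s0), 0 < q s0 k - q s0 (k + 1) := by
    by_contra h
    push_neg at h
    have hΔ0 : ∀ k ∈ Finset.Icc k0 (H s0), q s0 k - q s0 (k + 1) = 0 := by
      intro k hk
      have hk' : k ∈ Finset.Icc 1 (H s0) := by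
        simp only [Finset.mem_Icc] at hk hk0 ⊢; omega
      exact le_antisymm (h k hk') (hΔ s0 k hk')
    have tel := telesc (fun k => q s0 k) k0 (H s0) (by
      simp only [Finset.mem_Icc] at hk0; omega)
    rw [Finset.sum_eq_zero hΔ0] at tel
    simp only [hqend s0] at tel
    have : q s0 k0 = 0 := by linarith
    linarith
  obtain ⟨k1, hk1, hΔpos⟩ := hexΔ
  -- Strict negativity of ∑∑ Δq (λ - φ*)
  have hneg : ∑ s, ∑ k ∈ Finset.Icc 1 (H s), (q s k - q s (k + 1)) * (lam s - φstar s k) < 0 := by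
    have hterm : ∀ s, ∀ k ∈ Finset.Icc 1 (H s),
        (q s k - q s (k + 1)) * (lam s - φstar s k) ≤ 0 := fun s k hk =>
      mul_nonpos_of_nonneg_of_nonpos (hΔ s k hk) (by linarith [hstrict s k hk])
    have h1 : ∀ s ∈ (Finset.univ : Finset Flow),
        ∑ k ∈ Finset.Icc 1 (H s), (q s k - q s (k + 1)) * (lam s - φstar s k) ≤ 0 :=
      fun s _ => Finset.sum_nonpos (hterm s)
    have h2 : ∑ k ∈ Finset.Icc 1 (H s0), (q s0 k - q s0 (k + 1)) * (lam s0 - φstar s0 k) < 0 := by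
      calc ∑ k ∈ Finset.Icc 1 (H s0), (q s0 k - q s0 (k + 1)) * (lam s0 - φstar s0 k)
          < ∑ k ∈ Finset.Icc 1 (H s0), (0 : ℝ) := by
            refine Finset.sum_lt_sum (fun k hk => hterm s0 k hk) ⟨k1, hk1, ?_⟩
            exact mul_neg_of_pos_of_neg hΔpos (by linarith [hstrict s0 k1 hk1])
        _ = 0 := Finset.sum_const_zero
    calc ∑ s, ∑ k ∈ Finset.Icc 1 (H s), (q s k - q s (k + 1)) * (lam s - φstar s k)
        < ∑ _s : Flow, (0 : ℝ) := by
          refine Finset.sum_lt_sum h1 ⟨s0, Finset.mem_univ s0, h2⟩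
      _ = 0 := Finset.sum_const_zero
  have hmax := hπmax φstar hφstarCo
  calc ∑ s, ∑ k ∈ Finset.Icc 1 (H s), q s k * q' s k
      ≤ ∑ s, ∑ k ∈ Finset.Icc 1 (H s), (q s k - q s (k + 1)) * (lam s - π s k) :=
        Finset.sum_le_sum fun s _ => key s
    _ = (∑ s, ∑ k ∈ Finset.Icc 1 (H s), (q s k - q s (k + 1)) * lam s)
        - ∑ s, ∑ k ∈ Finset.Icc 1 (H s), (q s k - q s (k + 1)) * π s k := by
        simp [mul_sub, Finset.sum_sub_distrib]
    _ ≤ (∑ s, ∑ k ∈ Finset.Icc 1 (H s), (q s k - q s (k + 1)) * lam s)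
        - ∑ s, ∑ k ∈ Finset.Icc 1 (H s), (q s k - q s (k + 1)) * φstar s k := by
        linarith
    _ = ∑ s, ∑ k ∈ Finset.Icc 1 (H s), (q s k - q s (k + 1)) * (lam s - φstar s k) := by
        simp [mul_sub, Finset.sum_sub_distrib]
    _ < 0 := hneg
end

section
/- Fix a time t at which the fluid dynamics hold and fix ε > 0. Assume that Δq_{s,k}(t) ≥ 0 for all (s,k) ∈ P, that π(t) = (π_{s,k}(t))_{(s,k)∈P} lies in Co(M) and maximizes Σ_{(s,k)∈P} Δq_{s,k}(t)·φ_{s,k} over all φ ∈ Co(M), and that there exists φ* ∈ Co(M) with λ_s + ε ≤ φ*_{s,k} for all (s,k) ∈ P. Then Σ_{(s,k)∈P} q_{s,k}(t)·q'_{s,k}(t) ≤ −ε·Σ_{s∈S} q_{s,1}(t). -/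
lemma stmt_3_tele (q : ℕ → ℝ) : ∀ n : ℕ,
    ∑ k ∈ Finset.Icc 1 n, (q k - q (k+1)) = q 1 - q (n+1) := by
  intro n
  induction n with
  | zero => simp
  | succ n ih =>
    rw [Finset.sum_Icc_succ_top (by omega), ih]; ring

lemma stmt_3_aux (q ψ π : ℕ → ℝ) (lam : ℝ) (hψ0 : ψ 0 = lam) :
    ∀ n, 1 ≤ n →
    (∀ k ∈ Finset.Icc 1 n, 0 ≤ q k) →
    (∀ k ∈ Finset.Icc 1 n, ψ k ≤ π k) →
    ∑ k ∈ Finset.Icc 1 n, q k * (ψ (k-1) - π k)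
      ≤ lam * q 1 - ∑ k ∈ Finset.Icc 1 n, (q k - q (k+1)) * π k - q (n+1) * π n := by
  intro n hn
  induction n, hn using Nat.le_induction with
  | base =>
    intro _ _
    simp only [Finset.Icc_self, Finset.sum_singleton, hψ0]
    norm_num
    nlinarith [le_refl (q 1 * π 1)]
  | succ n hn ih =>
    intro hq0 hψπ
    have h1 : ∀ k ∈ Finset.Icc 1 n, 0 ≤ q k := fun k hk => by
      have := Finset.mem_Icc.mp hk
      exact hq0 k (Finset.mem_Icc.mpr ⟨this.1, by omega⟩)
    have h2 : ∀ k ∈ Finset.Icc 1 n, ψ k ≤ π k := fun k hk => by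
      have := Finset.mem_Icc.mp hk
      exact hψπ k (Finset.mem_Icc.mpr ⟨this.1, by omega⟩)
    have IH := ih h1 h2
    have hqn1 : 0 ≤ q (n+1) := hq0 (n+1) (Finset.mem_Icc.mpr ⟨by omega, le_refl _⟩)
    have hpsn : ψ n ≤ π n := hψπ n (Finset.mem_Icc.mpr ⟨hn, by omega⟩)
    have key : q (n+1) * ψ n ≤ q (n+1) * π n := mul_le_mul_of_nonneg_left hpsn hqn1
    rw [Finset.sum_Icc_succ_top (by omega), Finset.sum_Icc_succ_top (by omega)]
    simp only [Nat.add_sub_cancel]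
    nlinarith [IH, key]



/-- Quantitative negative drift for the queue-length-based back-pressure
scheduler in the fluid limit model.  In the setting of the fluid limit model
at a fixed regular time `t` (see the hypotheses), if there is `φ* ∈ Co(M)`
with `lam s + ε ≤ φ* s k` for all link-flow-pairs `(s,k)` (with `ε > 0`),
then `∑ q·q' ≤ -ε · ∑_s q s 1`. -/
theorem stmt_3
    (Flow : Type*) [Fintype Flow] [Nonempty Flow]
    (H : Flow → ℕ) (hH : ∀ s, 1 ≤ H s)
    (M : Set (Flow → ℕ → ℝ)) (hMne : M.Nonempty)
    (hM01 : ∀ m ∈ M, ∀ s, ∀ k ∈ Finset.Icc 1 (H s), m s k = 0 ∨ m s k = 1)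
    (lam : Flow → ℝ) (hlam : ∀ s, 0 ≤ lam s)
    (q q' ψ π : Flow → ℕ → ℝ)
    (hq0 : ∀ s, ∀ k ∈ Finset.Icc 1 (H s), 0 ≤ q s k)
    (hqend : ∀ s, q s (H s + 1) = 0)
    (hψ0 : ∀ s, ψ s 0 = lam s)
    (hψπ : ∀ s, ∀ k ∈ Finset.Icc 1 (H s), 0 ≤ ψ s k ∧ ψ s k ≤ π s k)
    (hq'pos : ∀ s, ∀ k ∈ Finset.Icc 1 (H s),
      0 < q s k → q' s k = ψ s (k - 1) - π s k)
    (hq'zero : ∀ s, ∀ k ∈ Finset.Icc 1 (H s),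
      q s k = 0 → q' s k = max (ψ s (k - 1) - π s k) 0)
    (hΔ : ∀ s, ∀ k ∈ Finset.Icc 1 (H s), 0 ≤ q s k - q s (k + 1))
    (hπCo : π ∈ convexHull ℝ M)
    (hπmax : ∀ φ ∈ convexHull ℝ M,
      ∑ s, ∑ k ∈ Finset.Icc 1 (H s), (q s k - q s (k + 1)) * φ s k
        ≤ ∑ s, ∑ k ∈ Finset.Icc 1 (H s), (q s k - q s (k + 1)) * π s k)
    (ε : ℝ) (hε : 0 < ε)
    (φstar : Flow → ℕ → ℝ) (hφstarCo : φstar ∈ convexHull ℝ M)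
    (hstrict : ∀ s, ∀ k ∈ Finset.Icc 1 (H s), lam s + ε ≤ φstar s k) :
    ∑ s, ∑ k ∈ Finset.Icc 1 (H s), q s k * q' s k ≤ -ε * ∑ s, q s 1 := by
  classical
  have hrw : ∀ s, ∀ k ∈ Finset.Icc 1 (H s),
      q s k * q' s k = q s k * (ψ s (k-1) - π s k) := by
    intro s k hk
    rcases (hq0 s k hk).lt_or_eq with h | h
    · rw [hq'pos s k hk h]
    · rw [← h]; ring
  have hflow : ∀ s, ∑ k ∈ Finset.Icc 1 (H s), q s k * q' s k
      ≤ lam s * q s 1 - ∑ k ∈ Finset.Icc 1 (H s), (q s k - q s (k+1)) * π s k := by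
    intro s
    rw [Finset.sum_congr rfl (hrw s)]
    have h := stmt_3_aux (q s) (ψ s) (π s) (lam s) (hψ0 s) (H s) (hH s)
      (hq0 s) (fun k hk => (hψπ s k hk).2)
    rw [hqend s] at h
    linarith
  have hsum : ∑ s, ∑ k ∈ Finset.Icc 1 (H s), q s k * q' s k
      ≤ ∑ s, lam s * q s 1
        - ∑ s, ∑ k ∈ Finset.Icc 1 (H s), (q s k - q s (k+1)) * π s k := by
    rw [← Finset.sum_sub_distrib]
    exact Finset.sum_le_sum fun s _ => hflow s
  have hlow : ∑ s, (lam s + ε) * q s 1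
      ≤ ∑ s, ∑ k ∈ Finset.Icc 1 (H s), (q s k - q s (k+1)) * π s k := by
    refine le_trans ?_ (hπmax φstar hφstarCo)
    refine Finset.sum_le_sum fun s _ => ?_
    have h1 : (lam s + ε) * q s 1
        = ∑ k ∈ Finset.Icc 1 (H s), (q s k - q s (k+1)) * (lam s + ε) := by
      rw [← Finset.sum_mul, stmt_3_tele (q s) (H s), hqend s]; ring
    rw [h1]
    exact Finset.sum_le_sum fun k hk =>
      mul_le_mul_of_nonneg_left (hstrict s k hk) (hΔ s k hk)
  have hfin : ∑ s, lam s * q s 1 - ∑ s, (lam s + ε) * q s 1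
      = -ε * ∑ s, q s 1 := by
    rw [← Finset.sum_sub_distrib, Finset.mul_sum]
    exact Finset.sum_congr rfl fun s _ => by ring
  linarith
end

section
/- Fix a time t at which the fluid dynamics hold. Assume λ_s > 0 for every s ∈ S, that q_{s,k}(t) = λ_s·ŵ_{s,k}(t) for all (s,k), that Δŵ_{s,k}(t) ≥ 0 for all (s,k) ∈ P, and that π(t) = (π_{s,k}(t))_{(s,k)∈P} lies in Co(M) and maximizes the delay-differential weight sum Σ_{(s,k)∈P} Δŵ_{s,k}(t)·φ_{s,k} over all φ ∈ Co(M). Then for every φ ∈ Co(M), Σ_{(s,k)∈P} (q_{s,k}(t)/λ_s)·q'_{s,k}(t) ≤ Σ_{(s,k)∈P} Δŵ_{s,k}(t)·(λ_s − φ_{s,k}). -/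
lemma shift_sum (w ψ : ℕ → ℝ) (n : ℕ) :
    ∑ k ∈ Finset.Icc 1 (n+1), w k * ψ (k-1)
      = w 1 * ψ 0 + ∑ k ∈ Finset.Icc 1 n, w (k+1) * ψ k := by
  induction n with
  | zero => simp
  | succ m ih =>
    rw [Finset.sum_Icc_succ_top (by omega), ih, Finset.sum_Icc_succ_top (by omega : 1 ≤ m+1)]
    have : m + 1 + 1 - 1 = m + 1 := by omega
    rw [this]; ring

lemma tele_sum (w : ℕ → ℝ) (n : ℕ) :
    ∑ k ∈ Finset.Icc 1 (n+1), (w k - w (k+1)) = w 1 - w (n+2) := by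
  induction n with
  | zero => simp
  | succ m ih => rw [Finset.sum_Icc_succ_top (by omega), ih]; ring

lemma flowkey (n : ℕ) (w ψ π : ℕ → ℝ)
    (hwend : w (n+2) = 0)
    (hw : ∀ k ∈ Finset.Icc 1 (n+1), 0 ≤ w k)
    (hψπ : ∀ k ∈ Finset.Icc 1 (n+1), ψ k ≤ π k) :
    ∑ k ∈ Finset.Icc 1 (n+1), w k * (ψ (k-1) - π k)
      ≤ ∑ k ∈ Finset.Icc 1 (n+1), (w k - w (k+1)) * (ψ 0 - π k) := by
  have htele : ∑ k ∈ Finset.Icc 1 (n+1), (w k - w (k+1)) = w 1 := by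
    rw [tele_sum, hwend, sub_zero]
  have hmono : ∑ k ∈ Finset.Icc 1 n, w (k+1) * ψ k
      ≤ ∑ k ∈ Finset.Icc 1 n, w (k+1) * π k := by
    apply Finset.sum_le_sum
    intro k hk
    simp only [Finset.mem_Icc] at hk
    have h1 : 0 ≤ w (k+1) := hw (k+1) (by simp [Finset.mem_Icc]; omega)
    have h2 : ψ k ≤ π k := hψπ k (by simp [Finset.mem_Icc]; omega)
    exact mul_le_mul_of_nonneg_left h2 h1
  have hsplit : ∑ k ∈ Finset.Icc 1 (n+1), w (k+1) * π k
      = ∑ k ∈ Finset.Icc 1 n, w (k+1) * π k := by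
    rw [Finset.sum_Icc_succ_top (by omega), hwend]; ring
  have hLHS : ∑ k ∈ Finset.Icc 1 (n+1), w k * (ψ (k-1) - π k)
      = w 1 * ψ 0 + ∑ k ∈ Finset.Icc 1 n, w (k+1) * ψ k
        - ∑ k ∈ Finset.Icc 1 (n+1), w k * π k := by
    have : ∑ k ∈ Finset.Icc 1 (n+1), w k * (ψ (k-1) - π k)
        = ∑ k ∈ Finset.Icc 1 (n+1), w k * ψ (k-1)
          - ∑ k ∈ Finset.Icc 1 (n+1), w k * π k := by
      rw [← Finset.sum_sub_distrib]
      exact Finset.sum_congr rfl fun k _ => by ring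
    rw [this, shift_sum]
  have hRHS : ∑ k ∈ Finset.Icc 1 (n+1), (w k - w (k+1)) * (ψ 0 - π k)
      = w 1 * ψ 0 - ∑ k ∈ Finset.Icc 1 (n+1), w k * π k
        + ∑ k ∈ Finset.Icc 1 (n+1), w (k+1) * π k := by
    have : ∑ k ∈ Finset.Icc 1 (n+1), (w k - w (k+1)) * (ψ 0 - π k)
        = (∑ k ∈ Finset.Icc 1 (n+1), (w k - w (k+1))) * ψ 0
          - ∑ k ∈ Finset.Icc 1 (n+1), w k * π k
          + ∑ k ∈ Finset.Icc 1 (n+1), w (k+1) * π k := by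
      rw [Finset.sum_mul, ← Finset.sum_sub_distrib, ← Finset.sum_add_distrib]
      exact Finset.sum_congr rfl fun k _ => by ring
    rw [this, htele]
  rw [hLHS, hRHS, hsplit]
  linarith


/-- Drift bound for the delay-based back-pressure scheduler (D-BP) in the
fluid limit model.  Here `w s k` is the fluid delay metric `ŵ_{s,k}(t)` of
link-flow-pair `(s,k)` (with convention `w s (H s + 1) = 0`), the linear
relation `q s k = lam s * w s k` holds with `lam s > 0`, all delay
differentials `Δŵ s k = w s k - w s (k+1)` are nonnegative, and `π ∈ Co(M)`
maximizes the delay-differential weight sum `∑ Δŵ·φ` over `Co(M)`.  Then for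
every `φ ∈ Co(M)`, `∑ (q/λ)·q' ≤ ∑ Δŵ·(λ - φ)`. -/
theorem stmt_5
    (Flow : Type*) [Fintype Flow] [Nonempty Flow]
    (H : Flow → ℕ) (hH : ∀ s, 1 ≤ H s)
    (M : Set (Flow → ℕ → ℝ)) (hMne : M.Nonempty)
    (hM01 : ∀ m ∈ M, ∀ s, ∀ k ∈ Finset.Icc 1 (H s), m s k = 0 ∨ m s k = 1)
    (lam : Flow → ℝ) (hlam : ∀ s, 0 < lam s)
    (q q' ψ π w : Flow → ℕ → ℝ)
    (hq0 : ∀ s, ∀ k ∈ Finset.Icc 1 (H s), 0 ≤ q s k)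
    (hqend : ∀ s, q s (H s + 1) = 0)
    (hwend : ∀ s, w s (H s + 1) = 0)
    (hlin : ∀ s, ∀ k ∈ Finset.Icc 1 (H s), q s k = lam s * w s k)
    (hψ0 : ∀ s, ψ s 0 = lam s)
    (hψπ : ∀ s, ∀ k ∈ Finset.Icc 1 (H s), 0 ≤ ψ s k ∧ ψ s k ≤ π s k)
    (hq'pos : ∀ s, ∀ k ∈ Finset.Icc 1 (H s),
      0 < q s k → q' s k = ψ s (k - 1) - π s k)
    (hq'zero : ∀ s, ∀ k ∈ Finset.Icc 1 (H s),
      q s k = 0 → q' s k = max (ψ s (k - 1) - π s k) 0)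
    (hΔw : ∀ s, ∀ k ∈ Finset.Icc 1 (H s), 0 ≤ w s k - w s (k + 1))
    (hπCo : π ∈ convexHull ℝ M)
    (hπmax : ∀ φ ∈ convexHull ℝ M,
      ∑ s, ∑ k ∈ Finset.Icc 1 (H s), (w s k - w s (k + 1)) * φ s k
        ≤ ∑ s, ∑ k ∈ Finset.Icc 1 (H s), (w s k - w s (k + 1)) * π s k)
 :
    ∀ φ ∈ convexHull ℝ M,
      ∑ s, ∑ k ∈ Finset.Icc 1 (H s), (q s k / lam s) * q' s k
        ≤ ∑ s, ∑ k ∈ Finset.Icc 1 (H s), (w s k - w s (k + 1)) * (lam s - φ s k) := by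
  intro φ hφ
  have hw0 : ∀ s, ∀ k ∈ Finset.Icc 1 (H s), 0 ≤ w s k := by
    intro s k hk
    have h1 := hq0 s k hk
    have h2 := hlin s k hk
    nlinarith [hlam s]
  have hpt : ∀ s, ∀ k ∈ Finset.Icc 1 (H s),
      (q s k / lam s) * q' s k = w s k * (ψ s (k-1) - π s k) := by
    intro s k hk
    have hl := hlin s k hk
    have hlam' : lam s ≠ 0 := (hlam s).ne'
    rcases (hq0 s k hk).lt_or_eq with hpos | hzero
    · rw [hq'pos s k hk hpos, hl]
      field_simp
    · have hq : q s k = 0 := hzero.symm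
      have hw : w s k = 0 := by
        rw [hq] at hl
        rcases mul_eq_zero.mp hl.symm with h | h
        · exact absurd h hlam'
        · exact h
      rw [hq, hw]; simp
  have hflow : ∀ s, ∑ k ∈ Finset.Icc 1 (H s), w s k * (ψ s (k-1) - π s k)
      ≤ ∑ k ∈ Finset.Icc 1 (H s), (w s k - w s (k+1)) * (lam s - π s k) := by
    intro s
    obtain ⟨n, hn⟩ : ∃ n, H s = n + 1 := ⟨H s - 1, by have := hH s; omega⟩
    have hwe : w s (n + 2) = 0 := by
      have := hwend s; rw [hn] at this; exact this
    have h := flowkey n (w s) (ψ s) (π s) hwe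
      (by intro k hk; rw [← hn] at hk; exact hw0 s k hk)
      (by intro k hk; rw [← hn] at hk; exact (hψπ s k hk).2)
    rw [hψ0 s] at h
    rw [hn]
    exact h
  calc ∑ s, ∑ k ∈ Finset.Icc 1 (H s), (q s k / lam s) * q' s k
      = ∑ s, ∑ k ∈ Finset.Icc 1 (H s), w s k * (ψ s (k-1) - π s k) := by
        exact Finset.sum_congr rfl fun s _ => Finset.sum_congr rfl fun k hk => hpt s k hk
    _ ≤ ∑ s, ∑ k ∈ Finset.Icc 1 (H s), (w s k - w s (k+1)) * (lam s - π s k) :=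
        Finset.sum_le_sum fun s _ => hflow s
    _ ≤ ∑ s, ∑ k ∈ Finset.Icc 1 (H s), (w s k - w s (k+1)) * (lam s - φ s k) := by
        have h2 := hπmax φ hφ
        have e : ∀ x : Flow → ℕ → ℝ,
            ∑ s, ∑ k ∈ Finset.Icc 1 (H s), (w s k - w s (k+1)) * (lam s - x s k)
              = (∑ s, ∑ k ∈ Finset.Icc 1 (H s), (w s k - w s (k+1)) * lam s)
                - ∑ s, ∑ k ∈ Finset.Icc 1 (H s), (w s k - w s (k+1)) * x s k := by
          intro x
          rw [← Finset.sum_sub_distrib]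
          refine Finset.sum_congr rfl fun s _ => ?_
          rw [← Finset.sum_sub_distrib]
          exact Finset.sum_congr rfl fun k _ => by ring
        rw [e π, e φ]
        linarith
end

section
/- (Fluid-model throughput optimality of the delay-based back-pressure scheduler.) Fix a time t at which the fluid dynamics hold. Assume λ_s > 0 for every s ∈ S, that q_{s,k}(t) = λ_s·ŵ_{s,k}(t) for all (s,k), that Δŵ_{s,k}(t) ≥ 0 for all (s,k) ∈ P, that π(t) = (π_{s,k}(t))_{(s,k)∈P} lies in Co(M) and maximizes Σ_{(s,k)∈P} Δŵ_{s,k}(t)·φ_{s,k} over all φ ∈ Co(M), and that there exists φ* ∈ Co(M) with λ_s < φ*_{s,k} for all (s,k) ∈ P. If the Lyapunov function V(t) = (1/2)·Σ_{(s,k)∈P} q_{s,k}(t)²/λ_s is strictly positive, then its derivative Σ_{(s,k)∈P} (q_{s,k}(t)/λ_s)·q'_{s,k}(t) is strictly negative. -/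
private lemma tele_aux (f : ℕ → ℝ) :
    ∀ n a, a ≤ n + 1 → ∑ k ∈ Finset.Icc a n, (f k - f (k+1)) = f a - f (n+1) := by
  intro n
  induction n with
  | zero =>
    intro a ha
    interval_cases a <;> simp
  | succ n ih =>
    intro a ha
    rcases Nat.lt_or_ge a (n+2) with h | h
    · rw [Finset.sum_Icc_succ_top (by omega), ih a (by omega)]; ring
    · have : a = n + 2 := by omega
      subst this
      rw [Finset.Icc_eq_empty (by omega)]; simp

private lemma shift_aux (f g : ℕ → ℝ) (H : ℕ) (hH : 1 ≤ H) :
    ∑ k ∈ Finset.Icc 1 H, f k * g (k-1)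
      = f 1 * g 0 + ∑ j ∈ Finset.Icc 1 (H-1), f (j+1) * g j := by
  have h0 : Finset.Icc 1 H = insert 1 (Finset.Icc 2 H) := by
    ext x; simp [Finset.mem_Icc]; omega
  have h1 : Finset.Icc 2 H = Finset.map (addLeftEmbedding 1) (Finset.Icc 1 (H-1)) := by
    rw [Finset.map_add_left_Icc]; congr 1 <;> omega
  rw [h0, Finset.sum_insert (by simp), h1, Finset.sum_map]
  simp only [addLeftEmbedding_apply]
  congr 1
  apply Finset.sum_congr rfl
  intro j hj
  have : 1 + j - 1 = j := by omega
  rw [this, Nat.add_comm 1 j]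

private lemma ext_aux (f g : ℕ → ℝ) (n : ℕ) (h : f (n+1+1) = 0) :
    ∑ j ∈ Finset.Icc 1 n, f (j+1) * g j = ∑ j ∈ Finset.Icc 1 (n+1), f (j+1) * g j := by
  rw [Finset.sum_Icc_succ_top (by omega), h]; ring

/-- Fluid-model throughput optimality of the delay-based back-pressure
scheduler (D-BP).  In the setting of the fluid limit model at a fixed regular
time `t`, with `w s k` the fluid delay metric `ŵ_{s,k}(t)` (convention
`w s (H s + 1) = 0`), the linear relation `q s k = lam s * w s k` with
`lam s > 0`, nonnegative delay differentials, and `π ∈ Co(M)` maximizing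
`∑ Δŵ·φ` over `Co(M)`: if additionally there is `φ* ∈ Co(M)` with
`lam s < φ* s k` for all link-flow-pairs `(s,k)` and the Lyapunov function
`V = (1/2) ∑ q²/λ` is strictly positive, then its derivative
`∑ (q/λ)·q'` is strictly negative. -/
theorem stmt_6
    (Flow : Type*) [Fintype Flow] [Nonempty Flow]
    (H : Flow → ℕ) (hH : ∀ s, 1 ≤ H s)
    (M : Set (Flow → ℕ → ℝ)) (hMne : M.Nonempty)
    (hM01 : ∀ m ∈ M, ∀ s, ∀ k ∈ Finset.Icc 1 (H s), m s k = 0 ∨ m s k = 1)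
    (lam : Flow → ℝ) (hlam : ∀ s, 0 < lam s)
    (q q' ψ π w : Flow → ℕ → ℝ)
    (hq0 : ∀ s, ∀ k ∈ Finset.Icc 1 (H s), 0 ≤ q s k)
    (hqend : ∀ s, q s (H s + 1) = 0)
    (hwend : ∀ s, w s (H s + 1) = 0)
    (hlin : ∀ s, ∀ k ∈ Finset.Icc 1 (H s), q s k = lam s * w s k)
    (hψ0 : ∀ s, ψ s 0 = lam s)
    (hψπ : ∀ s, ∀ k ∈ Finset.Icc 1 (H s), 0 ≤ ψ s k ∧ ψ s k ≤ π s k)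
    (hq'pos : ∀ s, ∀ k ∈ Finset.Icc 1 (H s),
      0 < q s k → q' s k = ψ s (k - 1) - π s k)
    (hq'zero : ∀ s, ∀ k ∈ Finset.Icc 1 (H s),
      q s k = 0 → q' s k = max (ψ s (k - 1) - π s k) 0)
    (hΔw : ∀ s, ∀ k ∈ Finset.Icc 1 (H s), 0 ≤ w s k - w s (k + 1))
    (hπCo : π ∈ convexHull ℝ M)
    (hπmax : ∀ φ ∈ convexHull ℝ M,
      ∑ s, ∑ k ∈ Finset.Icc 1 (H s), (w s k - w s (k + 1)) * φ s k
        ≤ ∑ s, ∑ k ∈ Finset.Icc 1 (H s), (w s k - w s (k + 1)) * π s k)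
    (φstar : Flow → ℕ → ℝ) (hφstarCo : φstar ∈ convexHull ℝ M)
    (hstrict : ∀ s, ∀ k ∈ Finset.Icc 1 (H s), lam s < φstar s k)
    (hV : 0 < (1 / 2 : ℝ) * ∑ s, ∑ k ∈ Finset.Icc 1 (H s), (q s k) ^ 2 / lam s) :
    ∑ s, ∑ k ∈ Finset.Icc 1 (H s), (q s k / lam s) * q' s k < 0 := by
  -- w is nonnegative on the index set
  have hw0 : ∀ s, ∀ k ∈ Finset.Icc 1 (H s), 0 ≤ w s k := by
    intro s k hk
    have h1 := hq0 s k hk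
    have h2 := hlin s k hk
    nlinarith [hlam s]
  -- term identity: (q/λ)·q' = w·(ψ_{k-1} - π_k)
  have hterm : ∀ s, ∀ k ∈ Finset.Icc 1 (H s),
      (q s k / lam s) * q' s k = w s k * (ψ s (k-1) - π s k) := by
    intro s k hk
    have hl := (hlam s).ne'
    have hq := hlin s k hk
    rcases (hq0 s k hk).lt_or_eq with hpos | hzero
    · rw [hq'pos s k hk hpos, hq]
      field_simp
    · have hw : w s k = 0 := by
        have h0 : lam s * w s k = 0 := by rw [← hq, ← hzero]
        exact (mul_eq_zero.mp h0).resolve_left hl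
      rw [← hzero, hw]
      simp
  -- rewrite the goal sum
  have hrw : ∑ s, ∑ k ∈ Finset.Icc 1 (H s), (q s k / lam s) * q' s k
      = ∑ s, ∑ k ∈ Finset.Icc 1 (H s), w s k * (ψ s (k-1) - π s k) :=
    Finset.sum_congr rfl fun s _ => Finset.sum_congr rfl fun k hk => hterm s k hk
  rw [hrw]
  -- per-flow bound
  have key : ∀ s, ∑ k ∈ Finset.Icc 1 (H s), w s k * (ψ s (k-1) - π s k)
      ≤ ∑ k ∈ Finset.Icc 1 (H s), (w s k - w s (k+1)) * (lam s - π s k) := by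
    intro s
    have hsplit : ∑ k ∈ Finset.Icc 1 (H s), w s k * ψ s (k-1)
        = w s 1 * ψ s 0 + ∑ j ∈ Finset.Icc 1 (H s - 1), w s (j+1) * ψ s j :=
      shift_aux (w s) (ψ s) (H s) (hH s)
    have hbound : ∑ j ∈ Finset.Icc 1 (H s - 1), w s (j+1) * ψ s j
        ≤ ∑ j ∈ Finset.Icc 1 (H s - 1), w s (j+1) * π s j := by
      apply Finset.sum_le_sum
      intro j hj
      have hj' : j ∈ Finset.Icc 1 (H s) := by
        simp only [Finset.mem_Icc] at hj ⊢; omega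
      have hwj : 0 ≤ w s (j+1) := by
        rcases Nat.lt_or_ge j (H s) with h | h
        · exact hw0 s (j+1) (by simp only [Finset.mem_Icc] at hj' ⊢; omega)
        · have : j + 1 = H s + 1 := by
            simp only [Finset.mem_Icc] at hj'; omega
          rw [this, hwend s]
      exact mul_le_mul_of_nonneg_left (hψπ s j hj').2 hwj
    have hext : ∑ j ∈ Finset.Icc 1 (H s - 1), w s (j+1) * π s j
        = ∑ j ∈ Finset.Icc 1 (H s), w s (j+1) * π s j := by
      have hext' := ext_aux (w s) (π s) (H s - 1)
        (by rw [show H s - 1 + 1 + 1 = H s + 1 by have := hH s; omega]; exact hwend s)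
      rwa [show H s - 1 + 1 = H s from by have := hH s; omega] at hext'
    have htele : ∑ k ∈ Finset.Icc 1 (H s), (w s k - w s (k+1)) = w s 1 := by
      rw [tele_aux (w s) (H s) 1 (by omega), hwend s]; ring
    have expand : ∑ k ∈ Finset.Icc 1 (H s), (w s k - w s (k+1)) * (lam s - π s k)
        = lam s * ∑ k ∈ Finset.Icc 1 (H s), (w s k - w s (k+1))
          - (∑ k ∈ Finset.Icc 1 (H s), w s k * π s k
             - ∑ k ∈ Finset.Icc 1 (H s), w s (k+1) * π s k) := by
      rw [Finset.mul_sum, ← Finset.sum_sub_distrib, ← Finset.sum_sub_distrib]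
      apply Finset.sum_congr rfl
      intro k _; ring
    calc ∑ k ∈ Finset.Icc 1 (H s), w s k * (ψ s (k-1) - π s k)
        = ∑ k ∈ Finset.Icc 1 (H s), w s k * ψ s (k-1)
          - ∑ k ∈ Finset.Icc 1 (H s), w s k * π s k := by
          rw [← Finset.sum_sub_distrib]
          exact Finset.sum_congr rfl fun k _ => by ring
      _ ≤ w s 1 * ψ s 0 + ∑ j ∈ Finset.Icc 1 (H s), w s (j+1) * π s j
          - ∑ k ∈ Finset.Icc 1 (H s), w s k * π s k := by
          rw [hsplit]
          linarith [hbound, hext.le, hext.ge]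
      _ = ∑ k ∈ Finset.Icc 1 (H s), (w s k - w s (k+1)) * (lam s - π s k) := by
          rw [expand, htele, hψ0 s]; ring
  -- use the maximality against φstar
  have hmax := hπmax φstar hφstarCo
  have step2 : ∑ s, ∑ k ∈ Finset.Icc 1 (H s), (w s k - w s (k+1)) * (lam s - π s k)
      ≤ ∑ s, ∑ k ∈ Finset.Icc 1 (H s), (w s k - w s (k+1)) * (lam s - φstar s k) := by
    have e1 : ∀ (φ : Flow → ℕ → ℝ),
        ∑ s, ∑ k ∈ Finset.Icc 1 (H s), (w s k - w s (k+1)) * (lam s - φ s k)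
        = ∑ s, ∑ k ∈ Finset.Icc 1 (H s), (w s k - w s (k+1)) * lam s
          - ∑ s, ∑ k ∈ Finset.Icc 1 (H s), (w s k - w s (k+1)) * φ s k := by
      intro φ
      rw [← Finset.sum_sub_distrib]
      apply Finset.sum_congr rfl
      intro s _
      rw [← Finset.sum_sub_distrib]
      exact Finset.sum_congr rfl fun k _ => by ring
    rw [e1 π, e1 φstar]
    linarith
  -- find a strictly positive queue
  have hex : ∃ s, ∃ k ∈ Finset.Icc 1 (H s), 0 < q s k := by
    by_contra hcon
    push_neg at hcon
    have : ∑ s, ∑ k ∈ Finset.Icc 1 (H s), (q s k) ^ 2 / lam s = 0 := by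
      apply Finset.sum_eq_zero
      intro s _
      apply Finset.sum_eq_zero
      intro k hk
      have : q s k = 0 := le_antisymm (hcon s k hk) (hq0 s k hk)
      simp [this]
    rw [this] at hV
    norm_num at hV
  obtain ⟨s₀, k₀, hk₀, hq₀⟩ := hex
  -- get a strictly positive delay differential
  have hw₀ : 0 < w s₀ k₀ := by
    have := hlin s₀ k₀ hk₀
    nlinarith [hlam s₀]
  have hexΔ : ∃ j ∈ Finset.Icc 1 (H s₀), 0 < w s₀ j - w s₀ (j+1) := by
    by_contra hcon
    push_neg at hcon
    have hk₀' := Finset.mem_Icc.mp hk₀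
    have hsum : ∑ j ∈ Finset.Icc k₀ (H s₀), (w s₀ j - w s₀ (j+1)) = w s₀ k₀ := by
      rw [tele_aux (w s₀) (H s₀) k₀ (by omega), hwend s₀]; ring
    have hle : ∑ j ∈ Finset.Icc k₀ (H s₀), (w s₀ j - w s₀ (j+1)) ≤ 0 := by
      apply Finset.sum_nonpos
      intro j hj
      apply hcon j
      simp only [Finset.mem_Icc] at hj ⊢; omega
    linarith
  obtain ⟨j₀, hj₀, hΔ₀⟩ := hexΔ
  -- the final strict negativity
  have final : ∑ s, ∑ k ∈ Finset.Icc 1 (H s), (w s k - w s (k+1)) * (lam s - φstar s k) < 0 := by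
    have hinner_nonpos : ∀ s, ∑ k ∈ Finset.Icc 1 (H s),
        (w s k - w s (k+1)) * (lam s - φstar s k) ≤ 0 := by
      intro s
      apply Finset.sum_nonpos
      intro k hk
      exact mul_nonpos_of_nonneg_of_nonpos (hΔw s k hk) (by linarith [hstrict s k hk])
    have hinner_neg : ∑ k ∈ Finset.Icc 1 (H s₀),
        (w s₀ k - w s₀ (k+1)) * (lam s₀ - φstar s₀ k) < 0 := by
      have := Finset.sum_lt_sum (f := fun k => (w s₀ k - w s₀ (k+1)) * (lam s₀ - φstar s₀ k))
        (g := fun _ => (0:ℝ))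
        (fun k hk => mul_nonpos_of_nonneg_of_nonpos (hΔw s₀ k hk)
          (by linarith [hstrict s₀ k hk]))
        ⟨j₀, hj₀, mul_neg_of_pos_of_neg hΔ₀ (by linarith [hstrict s₀ j₀ hj₀])⟩
      simpa using this
    have := Finset.sum_lt_sum (s := (Finset.univ : Finset Flow))
      (f := fun s => ∑ k ∈ Finset.Icc 1 (H s), (w s k - w s (k+1)) * (lam s - φstar s k))
      (g := fun _ => (0:ℝ))
      (fun s _ => hinner_nonpos s)
      ⟨s₀, Finset.mem_univ s₀, hinner_neg⟩
    simpa using this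
  calc ∑ s, ∑ k ∈ Finset.Icc 1 (H s), w s k * (ψ s (k-1) - π s k)
      ≤ ∑ s, ∑ k ∈ Finset.Icc 1 (H s), (w s k - w s (k+1)) * (lam s - π s k) :=
        Finset.sum_le_sum fun s _ => key s
    _ ≤ ∑ s, ∑ k ∈ Finset.Icc 1 (H s), (w s k - w s (k+1)) * (lam s - φstar s k) := step2
    _ < 0 := final
end

section
/- (Invariance of bounded queue differentials under back-pressure-type scheduling.) Consider a single flow with H ≥ 1 hops. Let A : ℕ → ℕ (arrivals), Q_k : ℕ → ℤ for 1 ≤ k ≤ H+1 with Q_{H+1}(t) = 0 for all t, and Ψ_k : ℕ → {0,1} for 1 ≤ k ≤ H, with the convention Ψ_0(t) = A(t). Suppose that for all t ∈ ℕ and 1 ≤ k ≤ H: Q_k(t+1) = Q_k(t) + Ψ_{k−1}(t) − Ψ_k(t); Ψ_k(t) ≤ Q_k(t); and whenever Q_k(t) − Q_{k+1}(t) < 0 the scheduler does not serve hop k, i.e., Ψ_k(t) = 0. If Q_k(0) ≥ 0 and Q_k(0) ≥ Q_{k+1}(0) − 2 for all 1 ≤ k ≤ H, then for every t ∈ ℕ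 and every 1 ≤ k ≤ H it holds that Q_k(t) ≥ Q_{k+1}(t) − 2 (and Q_k(t) ≥ 0). -/
/-- Invariance of bounded queue differentials under back-pressure-type
scheduling, for a single flow with `H ≥ 1` hops.  `Q k t` is the queue at hop
`k` at slot `t` (with `Q (H+1) t = 0`), `Ψ k t ∈ {0,1}` is the number of
packets transmitted from hop `k` at slot `t` (with `Ψ 0 t = A t`, the
exogenous arrivals).  Queues evolve by `Q k (t+1) = Q k t + Ψ (k-1) t -
Ψ k t`, never serve more than the queue (`Ψ k t ≤ Q k t`), and a hop with
negative queue differential is never served.  If initially `Q k 0 ≥ 0` and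
`Q k 0 ≥ Q (k+1) 0 - 2` for all `1 ≤ k ≤ H`, then for every slot `t` and
every `1 ≤ k ≤ H`, `Q k t ≥ Q (k+1) t - 2` and `Q k t ≥ 0`. -/
theorem stmt_7
    (H : ℕ) (hH : 1 ≤ H)
    (A : ℕ → ℕ) (Q Ψ : ℕ → ℕ → ℤ)
    (hQend : ∀ t, Q (H + 1) t = 0)
    (hΨ0 : ∀ t, Ψ 0 t = (A t : ℤ))
    (hΨ01 : ∀ k ∈ Finset.Icc 1 H, ∀ t, Ψ k t = 0 ∨ Ψ k t = 1)
    (hevol : ∀ k ∈ Finset.Icc 1 H, ∀ t, Q k (t + 1) = Q k t + Ψ (k - 1) t - Ψ k t)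
    (hserve : ∀ k ∈ Finset.Icc 1 H, ∀ t, Ψ k t ≤ Q k t)
    (hbp : ∀ k ∈ Finset.Icc 1 H, ∀ t, Q k t - Q (k + 1) t < 0 → Ψ k t = 0)
    (hinit0 : ∀ k ∈ Finset.Icc 1 H, 0 ≤ Q k 0)
    (hinitd : ∀ k ∈ Finset.Icc 1 H, Q (k + 1) 0 - 2 ≤ Q k 0) :
    ∀ t : ℕ, ∀ k ∈ Finset.Icc 1 H, Q (k + 1) t - 2 ≤ Q k t ∧ 0 ≤ Q k t := by
  intro t
  induction t with
  | zero => intro k hk; exact ⟨hinitd k hk, hinit0 k hk⟩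
  | succ t ih =>
    intro k hk
    have hk' := Finset.mem_Icc.mp hk
    have hΨprev : 0 ≤ Ψ (k - 1) t := by
      rcases Nat.eq_or_lt_of_le hk'.1 with h | h
      · have hk0 : k - 1 = 0 := by omega
        rw [hk0, hΨ0]; positivity
      · have hm : k - 1 ∈ Finset.Icc 1 H := Finset.mem_Icc.mpr ⟨by omega, by omega⟩
        rcases hΨ01 _ hm t with h1 | h1 <;> simp [h1]
    have hΨk : Ψ k t = 0 ∨ Ψ k t = 1 := hΨ01 k hk t
    have hQk := hevol k hk t
    have hserveK := hserve k hk t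
    have ihk := ih k hk
    have hnonneg : 0 ≤ Q k (t + 1) := by rw [hQk]; linarith
    refine ⟨?_, hnonneg⟩
    by_cases hkH : k = H
    · subst hkH; rw [hQend (t + 1)]; linarith
    · have hk1H : k + 1 ∈ Finset.Icc 1 H := Finset.mem_Icc.mpr ⟨by omega, by omega⟩
      have hQk1 := hevol (k + 1) hk1H t
      simp only [Nat.add_sub_cancel] at hQk1
      have hΨk1 : Ψ (k + 1) t = 0 ∨ Ψ (k + 1) t = 1 := hΨ01 _ hk1H t
      rcases hΨk with h | h
      · rw [hQk, hQk1]
        rcases hΨk1 with h1 | h1 <;> rw [h, h1] <;> linarith [ihk.1]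
      · have hge : 0 ≤ Q k t - Q (k + 1) t := by
          by_contra hc
          push_neg at hc
          have := hbp k hk t (by linarith)
          omega
        rw [hQk, hQk1]
        rcases hΨk1 with h1 | h1 <;> rw [h, h1] <;> linarith
end
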